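/- For every real number b > 0, every observed value x̂ ∈ ℝ, and all real numbers a₁ ≤ a₂, the following identity holds: ∫_{x̂}^{∞} L(x; a₁, b) dx + ∫_{a₁}^{a₂} L̃(a; x̂, b) da + ∫_{−∞}^{x̂} L(x; a₂, b) dx = 1. -/

import Mathlib

open MeasureTheory

/-- The Laplace probability density `L(x; a, b) = (1/(2b)) * exp (-|x - a| / b)`. -/
noncomputable def laplaceDensity (x a b : ℝ) : ℝ :=
  (1 / (2 * b)) * Real.exp (-|x - a| / b)

/-- The confidence density of the location parameter `a` given observation `x̂`. -/
noncomputable def laplaceConfidenceDensity (a xhat b : ℝ) : ℝ :=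
  (1 / (2 * b)) * Real.exp (-|xhat - a| / b)

/-! Writing `F` for the distribution function of `L(·; 0, b)`, translation turns the three
integrals into `1 - F (x̂ - a₁)`, `F (x̂ - a₁) - F (x̂ - a₂)` and `F (x̂ - a₂)`, which telescope
to `1`. -/

open Set Real

section

variable {E : Type*} [NormedAddCommGroup E] [NormedSpace ℝ E]

theorem setIntegral_Ioi_comp_sub_right (g : ℝ → E) (c t : ℝ) :
    ∫ x in Ioi t, g (x - c) = ∫ x in Ioi (t - c), g x := by
  simpa using (measurePreserving_sub_right volume c).setIntegral_preimage_emb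
    (measurableEmbedding_subRight c) g (Ioi (t - c))

theorem setIntegral_Iic_comp_sub_right (g : ℝ → E) (c t : ℝ) :
    ∫ x in Iic t, g (x - c) = ∫ x in Iic (t - c), g x := by
  simpa using (measurePreserving_sub_right volume c).setIntegral_preimage_emb
    (measurableEmbedding_subRight c) g (Iic (t - c))

theorem integral_Ioi_add_intervalIntegral_add_integral_Iic {g : ℝ → E} (hg : Integrable g)
    (u v : ℝ) :
    (∫ x in Ioi u, g x) + (∫ x in v..u, g x) + ∫ x in Iic v, g x = ∫ x, g x := by
  rw [← intervalIntegral.integral_Iic_sub_Iic hg.integrableOn hg.integrableOn,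
    ← intervalIntegral.integral_Iic_add_Ioi hg.integrableOn hg.integrableOn]
  abel

end

theorem laplaceDensity_eq_sub (x a b : ℝ) :
    laplaceDensity x a b = laplaceDensity (x - a) 0 b := by
  rw [laplaceDensity, laplaceDensity, sub_zero]

theorem laplaceConfidenceDensity_eq (a xhat b : ℝ) :
    laplaceConfidenceDensity a xhat b = laplaceDensity (xhat - a) 0 b := by
  rw [laplaceConfidenceDensity, laplaceDensity, sub_zero]

theorem integral_laplaceDensity {b : ℝ} (hb : 0 < b) : ∫ x, laplaceDensity x 0 b = 1 := by
  have hexp : ∫ x in Ioi 0, exp (-b⁻¹ * x) = b := by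
    rw [integral_exp_mul_Ioi (by simpa using hb), mul_zero, exp_zero]
    field_simp
  simp only [laplaceDensity, sub_zero]
  rw [integral_comp_abs (f := fun y => 1 / (2 * b) * exp (-y / b)), integral_const_mul]
  simp_rw [neg_div, div_eq_inv_mul _ b, ← neg_mul, hexp]
  field_simp

theorem integrable_laplaceDensity {b : ℝ} (hb : 0 < b) : Integrable (laplaceDensity · 0 b) :=
  .of_integral_ne_zero (by rw [integral_laplaceDensity hb]; exact one_ne_zero)

theorem laplace_confidence_identity_general
    (b : ℝ) (hb : 0 < b) (xhat : ℝ) (a₁ a₂ : ℝ) :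
    (∫ x in Set.Ioi xhat, laplaceDensity x a₁ b) +
      (∫ a in a₁..a₂, laplaceConfidenceDensity a xhat b) +
        (∫ x in Set.Iic xhat, laplaceDensity x a₂ b) = 1 := by
  simp only [laplaceDensity_eq_sub _ a₁, laplaceDensity_eq_sub _ a₂, laplaceConfidenceDensity_eq]
  rw [setIntegral_Ioi_comp_sub_right (laplaceDensity · 0 b),
    intervalIntegral.integral_comp_sub_left (laplaceDensity · 0 b),
    setIntegral_Iic_comp_sub_right (laplaceDensity · 0 b),
    integral_Ioi_add_intervalIntegral_add_integral_Iic (integrable_laplaceDensity hb),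
    integral_laplaceDensity hb]

/-- `∫_{x̂}^{∞} L(x; a₁, b) dx + ∫_{a₁}^{a₂} L̃(a; x̂, b) da
      + ∫_{−∞}^{x̂} L(x; a₂, b) dx = 1`. -/
theorem laplace_confidence_identity
    (b : ℝ) (hb : 0 < b) (xhat : ℝ) (a₁ a₂ : ℝ) (h : a₁ ≤ a₂) :
    (∫ x in Set.Ioi xhat, laplaceDensity x a₁ b) +
      (∫ a in a₁..a₂, laplaceConfidenceDensity a xhat b) +
        (∫ x in Set.Iic xhat, laplaceDensity x a₂ b) = 1 :=
  laplace_confidence_identity_general b hb xhat a₁ a₂
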